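/- There exist two simple graphs on vertex set Fin 9 that are not isomorphic but have the same bivariate permanent polynomial. -/

import Mathlib

/-!
Expanding the permanent over permutations gives
`P(G; x, λ) = ∑_σ x ^ #{i | σ i = i} * λ ^ #{i | i ~ σ i}`, a polynomial whose coefficients are
counts of permutations, hence at most `n!`, and whose `λ`-degree is at most `n`. So for
`B > n!` the Kronecker substitution `x = B ^ (n + 1)`, `λ = B` reads the polynomial off the base-`B`
digits of one integer permanent, and two graphs are copermanent as soon as these integer
permanents agree. For the graphs `G₉` and `H₉`, Ryser's formula (`2⁹` subsets instead of `9!`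
permutations) makes that comparison small enough for the kernel. They are not isomorphic because
five vertices of `G₉` but only four of `H₉` lie on a triangle.
-/

open scoped Classical

/-- The permanent of a square matrix: `per(M) = ∑_σ ∏_i M i (σ i)`. -/
noncomputable def permanent {n : Type*} [DecidableEq n] [Fintype n] {R : Type*} [CommRing R]
    (M : Matrix n n R) : R :=
  ∑ σ : Equiv.Perm n, ∏ i, M i (σ i)

/-- The bivariate permanent polynomial of a simple graph `G` on `Fin n`:
`P(G; x, λ) = per(x • Iₙ + λ • A(G) + A(Ḡ))`, as an element of `ℤ[x, λ]`
(realized as `MvPolynomial (Fin 2) ℤ`, with `X 0 = x` and `X 1 = λ`). -/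
noncomputable def bivPermPoly {n : ℕ} (G : SimpleGraph (Fin n)) : MvPolynomial (Fin 2) ℤ :=
  permanent
    ((MvPolynomial.X 0 : MvPolynomial (Fin 2) ℤ) • (1 : Matrix (Fin n) (Fin n) (MvPolynomial (Fin 2) ℤ))
      + (MvPolynomial.X 1 : MvPolynomial (Fin 2) ℤ) • G.adjMatrix (MvPolynomial (Fin 2) ℤ)
      + Gᶜ.adjMatrix (MvPolynomial (Fin 2) ℤ))

open Finset

theorem sum_superset_neg_one_pow_card_compl {ι R : Type*} [Fintype ι] [DecidableEq ι]
    [CommRing R] (T : Finset ι) :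
    ∑ S with T ⊆ S, (-1 : R) ^ (Fintype.card ι - #S) = if T = univ then 1 else 0 := by
  calc ∑ S with T ⊆ S, (-1 : R) ^ (Fintype.card ι - #S)
      = ∑ U ∈ Tᶜ.powerset, (-1 : R) ^ #U := by
        refine sum_nbij' compl compl ?_ ?_ (fun _ _ => compl_compl _) (fun _ _ => compl_compl _) ?_
        · intro S hS; simpa using hS
        · intro S hS; simpa [subset_compl_comm] using hS
        · intro S _; rw [card_compl]
    _ = ((∑ U ∈ Tᶜ.powerset, (-1 : ℤ) ^ #U : ℤ) : R) := by push_cast; rfl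
    _ = if T = univ then 1 else 0 := by
        rw [sum_powerset_neg_one_pow_card]
        split_ifs <;> simp_all

theorem sum_perm_eq_sum_bijective {ι M : Type*} [Fintype ι] [DecidableEq ι] [AddCommMonoid M]
    (g : (ι → ι) → M) :
    ∑ σ : Equiv.Perm ι, g σ = ∑ f : ι → ι, if Function.Bijective f then g f else 0 := by
  rw [← sum_filter]
  exact sum_nbij' (⇑) (fun f => if h : Function.Bijective f then Equiv.ofBijective f h else 1)
    (by simp) (by simp) (by simp) (fun f hf => by rw [dif_pos (mem_filter.mp hf).2]; rfl) (by simp)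

theorem permanent_eq_ryser {ι R : Type*} [Fintype ι] [DecidableEq ι] [CommRing R]
    (M : Matrix ι ι R) :
    permanent M = ∑ S : Finset ι, (-1) ^ (Fintype.card ι - #S) * ∏ i, ∑ j ∈ S, M i j := by
  have expand (S : Finset ι) :
      ∏ i, ∑ j ∈ S, M i j = ∑ f : ι → ι, if ∀ i, f i ∈ S then ∏ i, M i (f i) else 0 := by
    rw [prod_univ_sum (t := fun _ => S) (f := fun i j => M i j), ← sum_filter]
    congr 1
    ext f
    simp [Fintype.mem_piFinset]
  have bij_iff (f : ι → ι) : Function.Bijective f ↔ univ.image f = univ := by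
    rw [← Finite.surjective_iff_bijective, ← coe_eq_univ, coe_image, coe_univ, Set.image_univ,
      Set.range_eq_univ]
  calc permanent M
      = ∑ f : ι → ι, if Function.Bijective f then ∏ i, M i (f i) else 0 :=
        sum_perm_eq_sum_bijective (fun f => ∏ i, M i (f i))
    _ = ∑ f : ι → ι, ∑ S with univ.image f ⊆ S,
          (-1) ^ (Fintype.card ι - #S) * ∏ i, M i (f i) := by
        simp_rw [← sum_mul, sum_superset_neg_one_pow_card_compl, bij_iff, ite_mul, one_mul,
          zero_mul]
    _ = _ := by
        simp_rw [expand, mul_sum, sum_filter]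
        rw [sum_comm]
        simp [image_subset_iff]

theorem Nat.eq_of_sum_mul_pow_eq {B K : ℕ} (hB : 1 < B) {d e : Fin K → ℕ}
    (hd : ∀ i, d i < B) (he : ∀ i, e i < B)
    (h : ∑ i, d i * B ^ (i : ℕ) = ∑ i, e i * B ^ (i : ℕ)) : d = e := by
  refine List.ofFn_inj.mp (Nat.ofDigits_inj_of_len_eq hB (by simp) ?_ ?_ ?_)
  · simpa [List.mem_ofFn] using hd
  · simpa [List.mem_ofFn] using he
  · simpa only [Nat.ofDigits_eq_sum_mapIdx, List.mapIdx_eq_ofFn, List.get_ofFn, List.length_ofFn,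
      Fin.val_cast, Fin.cast_cast, Fin.cast_eq_self, mul_comm, List.sum_ofFn] using h

theorem Multiset.eq_of_sum_map_pow_eq {B : ℕ} (hB : 1 < B) {s t : Multiset ℕ}
    (hs : ∀ c, s.count c < B) (ht : ∀ c, t.count c < B)
    (h : (s.map (B ^ ·)).sum = (t.map (B ^ ·)).sum) : s = t := by
  obtain ⟨K, hK⟩ : ∃ K, ∀ c ∈ s + t, c < K :=
    ⟨(s + t).sum + 1, fun c hc => Nat.lt_succ_of_le (Multiset.le_sum_of_mem hc)⟩
  have lt_K {u : Multiset ℕ} (hu : u ≤ s + t) {c : ℕ} (hc : c ∈ u) : c < K :=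
    hK c (Multiset.mem_of_le hu hc)
  have expand {u : Multiset ℕ} (hu : u ≤ s + t) :
      (u.map (B ^ ·)).sum = ∑ i : Fin K, u.count (i : ℕ) * B ^ (i : ℕ) := by
    rw [sum_multiset_map_count, Fin.sum_univ_eq_sum_range (fun i => u.count i * B ^ i)]
    refine sum_subset (fun c hc => mem_range.mpr (lt_K hu (Multiset.mem_toFinset.mp hc)))
      fun c _ hc => ?_
    simp [Multiset.count_eq_zero.mpr (mt Multiset.mem_toFinset.mpr hc)]
  have digits := Nat.eq_of_sum_mul_pow_eq hB (fun i => hs i) (fun i => ht i)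
    (by rw [← expand (Multiset.le_add_right s t), ← expand (Multiset.le_add_left t s), h])
  ext c
  by_cases hc : c < K
  · exact congrFun digits ⟨c, hc⟩
  · rw [Multiset.count_eq_zero.mpr fun h => hc (lt_K (Multiset.le_add_right s t) h),
      Multiset.count_eq_zero.mpr fun h => hc (lt_K (Multiset.le_add_left t s) h)]

theorem sum_pow_mul_pow_eq_of_kronecker {α S : Type*} [Fintype α] [CommSemiring S] {m B : ℕ}
    (hB : Fintype.card α < B) {a b a' b' : α → ℕ} (hb : ∀ σ, b σ ≤ m) (hb' : ∀ σ, b' σ ≤ m)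
    (h : ∑ σ, (B ^ (m + 1)) ^ a σ * B ^ b σ = ∑ σ, (B ^ (m + 1)) ^ a' σ * B ^ b' σ) (x y : S) :
    ∑ σ, x ^ a σ * y ^ b σ = ∑ σ, x ^ a' σ * y ^ b' σ := by
  rcases isEmpty_or_nonempty α with hα | hα
  · simp
  have decode {a b : α → ℕ} (hb : ∀ σ, b σ ≤ m) (F : ℕ → ℕ → S) :
      ∑ σ, F (a σ) (b σ) = ((univ.val.map fun σ => (m + 1) * a σ + b σ).map
        fun c => F (c / (m + 1)) (c % (m + 1))).sum := by
    simp only [sum_eq_multiset_sum, Multiset.map_map, Function.comp_def]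
    congr 2
    ext σ
    rw [Nat.mul_add_div m.succ_pos, Nat.div_eq_of_lt (Nat.lt_succ_of_le (hb σ)), add_zero,
      Nat.mul_add_mod_self_left, Nat.mod_eq_of_lt (Nat.lt_succ_of_le (hb σ))]
  have count_lt (f : α → ℕ) (c : ℕ) : (univ.val.map f).count c < B :=
    (Multiset.count_le_card _ _).trans_lt (by rwa [Multiset.card_map, card_val, card_univ])
  have codes : univ.val.map (fun σ => (m + 1) * a σ + b σ) =
      univ.val.map (fun σ => (m + 1) * a' σ + b' σ) := by
    refine Multiset.eq_of_sum_map_pow_eq (Nat.lt_of_le_of_lt Fintype.card_pos hB)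
      (count_lt _) (count_lt _) ?_
    simpa only [Multiset.map_map, Function.comp_def, pow_add, pow_mul, ← sum_eq_multiset_sum]
      using h
  rw [decode hb fun i j => x ^ i * y ^ j, decode hb' fun i j => x ^ i * y ^ j, codes]

section BivariateMatrix

variable {V R : Type*} [DecidableEq V] [CommRing R]

def bivPermMatrix (G : SimpleGraph V) [DecidableRel G.Adj] (x y : R) : Matrix V V R :=
  Matrix.of fun i j => if i = j then x else if G.Adj i j then y else 1

theorem smul_one_add_smul_adjMatrix_add_compl_eq (G : SimpleGraph V) [DecidableRel G.Adj]
    (x y : R) : x • 1 + y • G.adjMatrix R + Gᶜ.adjMatrix R = bivPermMatrix G x y := by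
  ext i j
  by_cases hij : i = j
  · simp [bivPermMatrix, hij]
  · by_cases hG : G.Adj i j <;> simp [bivPermMatrix, hij, hG, SimpleGraph.compl_adj]

theorem permanent_bivPermMatrix [Fintype V] (G : SimpleGraph V) [DecidableRel G.Adj] (x y : R) :
    permanent (bivPermMatrix G x y) =
      ∑ σ : Equiv.Perm V, x ^ #{i | σ i = i} * y ^ #{i | G.Adj i (σ i)} := by
  refine sum_congr rfl fun σ _ => ?_
  have adj_ne (i : V) : G.Adj i (σ i) → ¬σ i = i := fun h h' => G.ne_of_adj h h'.symm
  simp only [bivPermMatrix, Matrix.of_apply, eq_comm (a := (_ : V)) (b := σ _), prod_ite,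
    prod_const, one_pow, mul_one, filter_filter]
  congr 3
  exact filter_congr fun i _ => and_iff_right_of_imp (adj_ne i)

end BivariateMatrix

theorem bivPermPoly_eq_permanent_bivPermMatrix {n : ℕ} (G : SimpleGraph (Fin n))
    [DecidableRel G.Adj] :
    bivPermPoly G = permanent (bivPermMatrix G (MvPolynomial.X 0) (MvPolynomial.X 1)) := by
  rw [← smul_one_add_smul_adjMatrix_add_compl_eq]
  unfold bivPermPoly
  congr!

theorem bivPermPoly_eq_of_permanent_bivPermMatrix_eq {n B : ℕ} (hB : n.factorial < B)
    {G H : SimpleGraph (Fin n)} [DecidableRel G.Adj] [DecidableRel H.Adj]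
    (h : permanent (bivPermMatrix G ((B : ℤ) ^ (n + 1)) (B : ℤ)) =
      permanent (bivPermMatrix H ((B : ℤ) ^ (n + 1)) (B : ℤ))) :
    bivPermPoly G = bivPermPoly H := by
  have adj_le (K : SimpleGraph (Fin n)) [DecidableRel K.Adj] (σ : Equiv.Perm (Fin n)) :
      #{i | K.Adj i (σ i)} ≤ n :=
    (card_filter_le _ _).trans_eq (card_fin n)
  rw [bivPermPoly_eq_permanent_bivPermMatrix, bivPermPoly_eq_permanent_bivPermMatrix,
    permanent_bivPermMatrix, permanent_bivPermMatrix]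
  rw [permanent_bivPermMatrix, permanent_bivPermMatrix] at h
  refine sum_pow_mul_pow_eq_of_kronecker (m := n) (B := B)
    (by rwa [Fintype.card_perm, Fintype.card_fin]) (adj_le G) (adj_le H) ?_ _ _
  exact_mod_cast h

-- `abbrev`, so that the computable `DecidableRel` instance of `fromRel` is found by `decide`.
abbrev G₉ : SimpleGraph (Fin 9) := SimpleGraph.fromRel fun i j => (i, j) ∈
  [(0, 3), (0, 7), (0, 8), (1, 2), (1, 3), (2, 5), (2, 7), (3, 7), (4, 5), (4, 6), (5, 7), (6, 8)]

abbrev H₉ : SimpleGraph (Fin 9) := SimpleGraph.fromRel fun i j => (i, j) ∈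
  [(0, 2), (0, 3), (1, 5), (1, 7), (1, 8), (2, 7), (3, 4), (3, 8), (4, 6), (5, 6), (5, 8), (7, 8)]

namespace SimpleGraph

variable {V W : Type*} [Fintype V] [Fintype W]

def triangleVertices (G : SimpleGraph V) [DecidableRel G.Adj] : Finset V :=
  {v | ∃ w x, G.Adj v w ∧ G.Adj v x ∧ G.Adj w x}

variable {G : SimpleGraph V} {H : SimpleGraph W} [DecidableRel G.Adj] [DecidableRel H.Adj]

theorem Iso.apply_mem_triangleVertices (e : G ≃g H) {v : V} (hv : v ∈ G.triangleVertices) :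
    e v ∈ H.triangleVertices := by
  obtain ⟨w, x, hvw, hvx, hwx⟩ := (mem_filter.mp hv).2
  exact mem_filter.mpr ⟨mem_univ _, e w, e x, e.map_adj_iff.mpr hvw, e.map_adj_iff.mpr hvx,
    e.map_adj_iff.mpr hwx⟩

theorem Iso.card_triangleVertices_eq (e : G ≃g H) :
    #G.triangleVertices = #H.triangleVertices :=
  card_nbij' e e.symm (fun _ => e.apply_mem_triangleVertices)
    (fun _ => e.symm.apply_mem_triangleVertices) (fun v _ => e.symm_apply_apply v)
    (fun v _ => e.apply_symm_apply v)

end SimpleGraph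

theorem G₉_not_iso_H₉ : ¬Nonempty (G₉ ≃g H₉) := fun ⟨e⟩ =>
  absurd e.card_triangleVertices_eq (by decide)

theorem permanent_bivPermMatrix_G₉_eq_H₉ :
    permanent (bivPermMatrix G₉ (((2 ^ 20 : ℕ) : ℤ) ^ 10) ((2 ^ 20 : ℕ) : ℤ)) =
      permanent (bivPermMatrix H₉ (((2 ^ 20 : ℕ) : ℤ) ^ 10) ((2 ^ 20 : ℕ) : ℤ)) := by
  rw [permanent_eq_ryser, permanent_eq_ryser]
  decide +kernel

/-- There exist two non-isomorphic simple graphs on 9 vertices with the same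
bivariate permanent polynomial. -/
theorem exists_copermanent_nonisomorphic_on_nine_vertices :
    ∃ G H : SimpleGraph (Fin 9),
      ¬ Nonempty (G ≃g H) ∧ bivPermPoly G = bivPermPoly H := by
  refine ⟨G₉, H₉, G₉_not_iso_H₉, ?_⟩
  exact bivPermPoly_eq_of_permanent_bivPermMatrix_eq (by decide) permanent_bivPermMatrix_G₉_eq_H₉
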